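/- Let n ≥ 5 and let α, β be semigroup endomorphisms of T_n. Then α R* β, i.e. for all semigroup endomorphisms γ, δ of T_n one has γ·α = δ·α if and only if γ·β = δ·β, holds if and only if the same condition holds when γ and δ are restricted to idempotents: for all idempotent semigroup endomorphisms η, ζ of T_n, η·α = ζ·α if and only if η·β = ζ·β. -/

import Mathlib

/-- `s : Fin n → Fin n` is an odd permutation if it is the underlying function of some
permutation of sign `-1`. -/
def IsOddPerm {n : ℕ} (s : Fin n → Fin n) : Prop :=
  ∃ σ : Equiv.Perm (Fin n), Equiv.Perm.sign σ = -1 ∧ ⇑σ = s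

/-- `s : Fin n → Fin n` is an even permutation if it is the underlying function of some
permutation of sign `1`. -/
def IsEvenPerm {n : ℕ} (s : Fin n → Fin n) : Prop :=
  ∃ σ : Equiv.Perm (Fin n), Equiv.Perm.sign σ = 1 ∧ ⇑σ = s

/-- A pair `(t, e)` of elements of `T_n` is permissible if `t ∘ t ∘ t = t` and
`t ∘ e = e ∘ t = e ∘ e = e`. -/
def Permissible {n : ℕ} (t e : Fin n → Fin n) : Prop :=
  t ∘ t ∘ t = t ∧ t ∘ e = e ∧ e ∘ t = e ∧ e ∘ e = e

open Classical in
/-- For a (permissible) pair `(t, e)`, the map `φ_{t,e} : T_n → T_n` sending `s` to `t` if `s`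
is an odd permutation, to `t ∘ t` if `s` is an even permutation, and to `e` if `s` is not
bijective. -/
noncomputable def phi {n : ℕ} (t e : Fin n → Fin n) : (Fin n → Fin n) → (Fin n → Fin n) :=
  fun s => if IsOddPerm s then t else if IsEvenPerm s then t ∘ t else e

/-- `φ : T_n → T_n` is a semigroup endomorphism of `T_n` if `φ (s ∘ s') = φ s ∘ φ s'`
for all `s, s'`. -/
def IsEndo {n : ℕ} (φ : (Fin n → Fin n) → (Fin n → Fin n)) : Prop :=
  ∀ s s' : Fin n → Fin n, φ (s ∘ s') = φ s ∘ φ s'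

/-!
The kernel of an endomorphism `φ` of `T_n`, `n ≥ 5`, is one of the four congruences
`⊥ ≤ ker parity ≤ ker Bijective ≤ ⊤`, where `parity` records the sign of a permutation and sends
singular maps to `none`. On `S_n`, `φ` is a group homomorphism into the permutations of the range
of the idempotent `φ id`. If it is injective there, counting makes it onto, while a
non-injective `φ` identifies all constants, whose common image would then be fixed by every
permutation; so `φ` is injective. Otherwise its kernel is a nontrivial normal subgroup of `S_n`,
hence contains `A_n`: `φ` sees only the sign of a permutation, so it identifies the rank `n - 1`
idempotents `update id j i` (conjugate under `A_n`) and then, by induction on the rank, all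
singular maps.

`γ·α = δ·α` says that `γ x` and `δ x` are `ker α`-related for every `x`, so `α R* β` follows from
`ker α = ker β`. Consecutive kernels of the chain are told apart by idempotent endomorphisms: two
constant ones; the identity and `s ↦ if s bijective then id else const`; the identity and a
constant one.
-/

open Equiv Function

theorem Equiv.Perm.exists_sign_eq_one_apply_eq {α : Type*} [Fintype α] [DecidableEq α]
    (hα : 4 ≤ Nat.card α) {a b c d : α} (hab : a ≠ b) (hcd : c ≠ d) :
    ∃ π : Perm α, Perm.sign π = 1 ∧ π a = c ∧ π b = d := by
  have := alternatingGroup.isMultiplyPretransitive α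
  have := MulAction.isMultiplyPretransitive_of_le (G := alternatingGroup α) (α := α)
    (m := 2) (n := Nat.card α - 2) (by omega) (Nat.sub_le _ _)
  obtain ⟨π, hπa, hπb⟩ := MulAction.is_two_pretransitive_iff.mp this hab hcd
  exact ⟨π, π.2, hπa, hπb⟩

theorem comp_update_id_comp_symm {α : Type*} [DecidableEq α] (π : Perm α) (i j : α) :
    ⇑π ∘ update id j i ∘ ⇑π.symm = update id (π j) (π i) := by
  ext x
  by_cases hx : x = π j <;> simp [hx, Equiv.symm_apply_eq]

theorem update_comp_update_id {α β : Type*} [DecidableEq α] {s : α → β} {i j : α} (hij : i ≠ j)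
    (h : s i = s j) (m : β) : update s j m ∘ update id j i = s := by
  ext x
  by_cases hx : x = j <;> simp [hx, hij, h]

theorem update_id_comp_self {α : Type*} [DecidableEq α] {i j : α} (hij : i ≠ j) :
    update id j i ∘ update id j i = update id j i := by
  ext x
  by_cases hx : x = j <;> simp [hx, hij]

theorem swap_comp_update_id {α : Type*} [DecidableEq α] {i j : α} (hij : i ≠ j) :
    ⇑(swap i j) ∘ update id j i = update id i j := by
  ext x
  by_cases hxi : x = i <;> by_cases hxj : x = j <;>
    simp_all [swap_apply_of_ne_of_ne, Ne.symm hij]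

theorem not_bijective_const {α : Type*} [Nontrivial α] (c : α) : ¬ Bijective (const α c) :=
  fun h => not_injective_const h.1

theorem bijective_comp_iff {α : Type*} [Finite α] {s s' : α → α} :
    Bijective (s ∘ s') ↔ Bijective s ∧ Bijective s' := by
  refine ⟨fun h => ⟨?_, ?_⟩, fun h => h.1.comp h.2⟩
  · exact Finite.surjective_iff_bijective.mp h.2.of_comp
  · exact Finite.injective_iff_bijective.mp h.1.of_comp

noncomputable def parity {α : Type*} [Fintype α] [DecidableEq α] (s : α → α) : Option ℤˣ :=
  if h : Bijective s then some (Perm.sign (Equiv.ofBijective s h)) else none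

theorem parity_perm {α : Type*} [Fintype α] [DecidableEq α] (σ : Perm α) :
    parity ⇑σ = some (Perm.sign σ) := by
  rw [parity, dif_pos σ.bijective]
  exact congrArg (some ∘ Perm.sign) (Equiv.ext fun _ => rfl)

theorem parity_eq_none {α : Type*} [Fintype α] [DecidableEq α] {s : α → α} :
    parity s = none ↔ ¬ Bijective s := by
  simp [parity]

theorem parity_const {α : Type*} [Fintype α] [DecidableEq α] [Nontrivial α] (c : α) :
    parity (const α c) = none :=
  parity_eq_none.mpr (not_bijective_const c)

theorem bijective_iff_of_parity_eq {α : Type*} [Fintype α] [DecidableEq α] {s s' : α → α}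
    (h : parity s = parity s') : Bijective s ↔ Bijective s' := by
  rw [← not_iff_not, ← parity_eq_none, ← parity_eq_none, h]

namespace IsEndo

variable {n : ℕ} {φ : (Fin n → Fin n) → (Fin n → Fin n)}

theorem map_id_comp (hφ : IsEndo φ) (x : Fin n → Fin n) : φ id ∘ φ x = φ x := by
  rw [← hφ, id_comp]

theorem comp_map_id (hφ : IsEndo φ) (x : Fin n → Fin n) : φ x ∘ φ id = φ x := by
  rw [← hφ, comp_id]

theorem map_perm_comp_map_symm (hφ : IsEndo φ) (σ : Perm (Fin n)) :
    φ ⇑σ ∘ φ ⇑σ.symm = φ id := by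
  rw [← hφ, σ.self_comp_symm]

theorem map_apply_mem_range (hφ : IsEndo φ) (x : Fin n → Fin n) (y : Fin n) :
    φ x y ∈ Set.range (φ id) :=
  ⟨φ x y, congrFun (hφ.map_id_comp x) y⟩

theorem map_id_apply_of_mem_range (hφ : IsEndo φ) {y : Fin n} (hy : y ∈ Set.range (φ id)) :
    φ id y = y := by
  obtain ⟨z, rfl⟩ := hy
  exact congrFun (hφ.map_id_comp id) z

def permRestrict (hφ : IsEndo φ) : Perm (Fin n) →* Perm (Set.range (φ id)) where
  toFun σ :=
    { toFun y := ⟨φ σ y, hφ.map_apply_mem_range _ _⟩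
      invFun y := ⟨φ σ.symm y, hφ.map_apply_mem_range _ _⟩
      left_inv y := Subtype.ext <| by
        simpa using (congrFun (hφ.map_perm_comp_map_symm σ.symm) y).trans
          (hφ.map_id_apply_of_mem_range y.2)
      right_inv y := Subtype.ext <|
        (congrFun (hφ.map_perm_comp_map_symm σ) y).trans (hφ.map_id_apply_of_mem_range y.2) }
  map_one' := Equiv.ext fun y => Subtype.ext (hφ.map_id_apply_of_mem_range y.2)
  map_mul' σ τ := Equiv.ext fun y => Subtype.ext <| by
    simp [Perm.coe_mul, hφ _ _]

theorem permRestrict_eq_iff (hφ : IsEndo φ) {σ τ : Perm (Fin n)} :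
    hφ.permRestrict σ = hφ.permRestrict τ ↔ φ σ = φ τ := by
  refine ⟨fun h => ?_, fun h => Equiv.ext fun y => Subtype.ext (congrFun h y)⟩
  rw [← hφ.comp_map_id σ, ← hφ.comp_map_id τ]
  funext z
  exact congrArg Subtype.val (Equiv.ext_iff.mp h ⟨φ id z, z, rfl⟩)

theorem map_const_eq_of_not_injective (hφ : IsEndo φ) (h : ¬ Injective φ) (a b : Fin n) :
    φ (const _ a) = φ (const _ b) := by
  obtain ⟨x, y, hxy, hne⟩ := not_injective_iff.mp h
  obtain ⟨p, hp⟩ := Function.ne_iff.mp hne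
  have hcollapse : φ (const _ (x p)) = φ (const _ (y p)) := by
    rw [← comp_const, ← comp_const, hφ, hφ, hxy]
  -- an identification of two constants is moved by transpositions to any pair of constants
  have hto : ∀ c, φ (const _ (x p)) = φ (const _ c) := by
    intro c
    by_cases hcx : c = x p
    · rw [hcx]
    by_cases hcy : c = y p
    · rw [hcy, hcollapse]
    have hswap : ⇑(swap (y p) c) ∘ const (Fin n) (x p) = const _ (x p) := by
      rw [comp_const, swap_apply_of_ne_of_ne hp (Ne.symm hcx)]
    rw [← hswap, hφ, hcollapse, ← hφ, comp_const, swap_apply_left]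
  rw [← hto a, hto b]

theorem card_range_map_id (hn : 2 ≤ n) (hφ : IsEndo φ) (h : Injective hφ.permRestrict) :
    Nat.card (Set.range (φ id)) = n := by
  have hle : Nat.card (Set.range (φ id)) ≤ n := by
    simpa only [Nat.card_fin] using
      Nat.card_le_card_of_injective (Subtype.val : Set.range (φ id) → Fin n) Subtype.val_injective
  have hfact := Nat.card_le_card_of_injective _ h
  rw [Nat.card_perm, Nat.card_perm, Nat.card_fin] at hfact
  exact ((Nat.factorial_inj (by omega)).mp (le_antisymm hfact (Nat.factorial_le hle))).symm

theorem injective_of_injective_permRestrict (hn : 2 ≤ n) (hφ : IsEndo φ)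
    (h : Injective hφ.permRestrict) : Injective φ := by
  by_contra hφinj
  let a : Fin n := ⟨0, by omega⟩
  -- the image of the constants is a common fixed point of all the `permRestrict σ`
  let y₀ : Set.range (φ id) := ⟨φ (const _ a) a, hφ.map_apply_mem_range _ _⟩
  have hfix (σ : Perm (Fin n)) : hφ.permRestrict σ y₀ = y₀ := Subtype.ext <| by
    change (φ σ ∘ φ (const _ a)) a = φ (const _ a) a
    rw [← hφ, comp_const, hφ.map_const_eq_of_not_injective hφinj]
  have hsurj : Surjective hφ.permRestrict := (h.bijective_of_nat_card_le (by
    rw [Nat.card_perm, Nat.card_perm, hφ.card_range_map_id hn h, Nat.card_fin])).2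
  have : Nontrivial (Set.range (φ id)) := by
    rw [← Finite.one_lt_card_iff_nontrivial, hφ.card_range_map_id hn h]; omega
  obtain ⟨y₁, hy₁⟩ := exists_ne y₀
  obtain ⟨σ, hσ⟩ := hsurj (swap y₀ y₁)
  have := hfix σ
  rw [hσ, swap_apply_left] at this
  exact hy₁ this

theorem map_perm_eq_of_sign_eq (hn : 5 ≤ n) (hφ : IsEndo φ) (h : ¬ Injective hφ.permRestrict)
    {σ τ : Perm (Fin n)} (hστ : Perm.sign σ = Perm.sign τ) : φ σ = φ τ := by
  have hker : Nontrivial hφ.permRestrict.ker := by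
    rwa [Subgroup.nontrivial_iff_ne_bot, Ne, MonoidHom.ker_eq_bot_iff]
  have hA := Perm.alternatingGroup_le_of_normal (by simpa using hn) hker
  rw [← hφ.permRestrict_eq_iff, MonoidHom.eq_iff]
  exact hA (by simp [Perm.mem_alternatingGroup, hστ])

theorem map_perm_of_sign_eq_one
    (hsign : ∀ σ τ : Perm (Fin n), Perm.sign σ = Perm.sign τ → φ σ = φ τ)
    {σ : Perm (Fin n)} (hσ : Perm.sign σ = 1) : φ σ = φ id := by
  simpa using hsign σ 1 (by simpa using hσ)

theorem map_update_id_eq (hn : 4 ≤ n) (hφ : IsEndo φ)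
    (hsign : ∀ σ τ : Perm (Fin n), Perm.sign σ = Perm.sign τ → φ σ = φ τ)
    {i j i' j' : Fin n} (hij : i ≠ j) (hij' : i' ≠ j') :
    φ (update id j i) = φ (update id j' i') := by
  obtain ⟨π, hπ, rfl, rfl⟩ := Perm.exists_sign_eq_one_apply_eq (by simpa using hn) hij' hij
  rw [← comp_update_id_comp_symm, hφ, hφ, map_perm_of_sign_eq_one hsign hπ,
    map_perm_of_sign_eq_one hsign (by simpa using hπ), hφ.comp_map_id, hφ.map_id_comp]

theorem map_perm_comp_map_update_id (hn : 4 ≤ n) (hφ : IsEndo φ)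
    (hsign : ∀ σ τ : Perm (Fin n), Perm.sign σ = Perm.sign τ → φ σ = φ τ)
    (σ : Perm (Fin n)) {i j : Fin n} (hij : i ≠ j) :
    φ σ ∘ φ (update id j i) = φ (update id j i) := by
  rcases Int.units_eq_one_or (Perm.sign σ) with hσ | hσ
  · rw [map_perm_of_sign_eq_one hsign hσ, hφ.map_id_comp]
  · rw [hsign σ (swap i j) (by rw [hσ, Perm.sign_swap hij]), ← hφ, swap_comp_update_id hij,
      map_update_id_eq hn hφ hsign hij.symm hij]

theorem map_eq_map_update_id (hn : 4 ≤ n) (hφ : IsEndo φ)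
    (hsign : ∀ σ τ : Perm (Fin n), Perm.sign σ = Perm.sign τ → φ σ = φ τ)
    {i j : Fin n} (hij : i ≠ j) (s : Fin n → Fin n) (hs : ¬ Bijective s) :
    φ s = φ (update id j i) := by
  obtain ⟨k, l, hskl, hkl⟩ := not_injective_iff.mp (mt Finite.injective_iff_bijective.mp hs)
  obtain ⟨m, hm⟩ : ∃ m, m ∉ Set.range s := by
    simpa [Surjective] using mt Finite.surjective_iff_bijective.mp hs
  -- `s` factors through a collapsing idempotent and a map `u` whose range is strictly larger
  set u := update s l m
  have hu : u ∘ update id l k = s := update_comp_update_id hkl hskl m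
  have hrange : Set.range s ⊂ Set.range u :=
    Set.ssubset_iff_of_subset (hu ▸ Set.range_comp_subset_range _ _) |>.mpr
      ⟨m, ⟨l, update_self _ _ _⟩, hm⟩
  rw [← hu, hφ, map_update_id_eq hn hφ hsign hkl hij]
  by_cases hub : Bijective u
  · exact map_perm_comp_map_update_id hn hφ hsign (ofBijective u hub) hij
  · rw [map_eq_map_update_id hn hφ hsign hij u hub, ← hφ, update_id_comp_self hij]
termination_by (Set.range s)ᶜ.ncard
decreasing_by exact Set.ncard_lt_ncard (compl_lt_compl_iff_lt.mpr hrange)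

theorem ker_parity_le (hn : 5 ≤ n) (hφ : IsEndo φ) (h : ¬ Injective hφ.permRestrict) :
    Setoid.ker parity ≤ Setoid.ker φ := by
  intro x y (hxy : parity x = parity y)
  by_cases hx : Bijective x
  · have hy : Bijective y := (bijective_iff_of_parity_eq hxy).mp hx
    obtain ⟨σ, rfl⟩ : ∃ σ : Perm (Fin n), ⇑σ = x := ⟨ofBijective x hx, rfl⟩
    obtain ⟨τ, rfl⟩ : ∃ τ : Perm (Fin n), ⇑τ = y := ⟨ofBijective y hy, rfl⟩
    rw [parity_perm, parity_perm, Option.some_inj] at hxy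
    exact map_perm_eq_of_sign_eq hn hφ h hxy
  · have hy : ¬ Bijective y := mt (bijective_iff_of_parity_eq hxy).mpr hx
    have hsign := fun σ τ => map_perm_eq_of_sign_eq (σ := σ) (τ := τ) hn hφ h
    have h01 : (⟨0, by omega⟩ : Fin n) ≠ ⟨1, by omega⟩ := by simp
    exact (map_eq_map_update_id (by omega) hφ hsign h01 x hx).trans
      (map_eq_map_update_id (by omega) hφ hsign h01 y hy).symm

end IsEndo

section Kernels

variable {n : ℕ}

noncomputable def kerLevel (n : ℕ) : Fin 4 → Setoid (Fin n → Fin n) :=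
  ![⊥, Setoid.ker parity, Setoid.ker Bijective, ⊤]

theorem kerLevel_monotone : Monotone (kerLevel n) := by
  refine Fin.monotone_iff_le_succ.mpr fun k => ?_
  fin_cases k
  · exact bot_le
  · intro x y (hxy : parity x = parity y)
    exact propext (bijective_iff_of_parity_eq hxy)
  · exact le_top

theorem IsEndo.exists_ker_eq_kerLevel_of_ker_parity_le (hn : 2 ≤ n)
    {φ : (Fin n → Fin n) → (Fin n → Fin n)} (hφ : IsEndo φ)
    (h : Setoid.ker parity ≤ Setoid.ker φ) : ∃ k, Setoid.ker φ = kerLevel n k := by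
  have : Nontrivial (Fin n) := Fin.nontrivial_iff_two_le.mpr hn
  obtain ⟨a, b, hab⟩ := exists_pair_ne (Fin n)
  set t := φ (swap a b)
  set e := φ id
  set f := φ (const _ a)
  have hval (x : Fin n → Fin n) : φ x = (parity x).elim f (fun u => if u = 1 then e else t) := by
    rcases hx : parity x with _ | u
    · exact h (hx.trans (parity_const a).symm)
    · rcases Int.units_eq_one_or u with rfl | rfl
      · simpa using h (hx.trans (by simpa using (parity_perm (1 : Perm (Fin n))).symm))
      · simpa using h (hx.trans (by simpa [hab] using (parity_perm (swap a b)).symm))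
  have htt : t ∘ t = e := by rw [← hφ, ← Perm.coe_mul, swap_mul_self, Perm.coe_one]
  have htf : t ∘ f = f := by
    rw [← hφ, comp_const]
    exact h ((parity_const _).trans (parity_const a).symm)
  have hte_comp : t ∘ e = t := hφ.comp_map_id _
  by_cases hte : t = e
  · by_cases hfe : f = e
    · refine ⟨3, Setoid.ext fun x y => ?_⟩
      show φ x = φ y ↔ True
      rw [hval, hval]
      rcases parity x <;> rcases parity y <;> simp [hte, hfe]
    · refine ⟨2, Setoid.ext fun x y => ?_⟩
      show φ x = φ y ↔ Bijective x = Bijective y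
      rw [eq_iff_iff, ← not_iff_not (a := Bijective x), ← parity_eq_none, ← parity_eq_none,
        hval, hval]
      rcases parity x <;> rcases parity y <;> simp [hte, hfe, Ne.symm hfe]
  · have hfe : f ≠ e := fun hfe => hte (by rw [← hte_comp, ← hfe, htf, hfe])
    have hft : f ≠ t := fun hft => hte (by rw [← htt]; nth_rw 3 [← hft]; rw [htf, hft])
    refine ⟨1, Setoid.ext fun x y => ?_⟩
    show φ x = φ y ↔ parity x = parity y
    rw [hval, hval]
    rcases parity x with _ | u <;> rcases parity y with _ | v <;>
      (try rcases Int.units_eq_one_or u with rfl | rfl) <;>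
      (try rcases Int.units_eq_one_or v with rfl | rfl) <;>
      simp [hte, hfe, hft, Ne.symm hte, Ne.symm hfe, Ne.symm hft]

theorem IsEndo.exists_ker_eq_kerLevel (hn : 5 ≤ n) {φ : (Fin n → Fin n) → (Fin n → Fin n)}
    (hφ : IsEndo φ) : ∃ k, Setoid.ker φ = kerLevel n k := by
  by_cases h : Injective hφ.permRestrict
  · exact ⟨0, Setoid.ker_eq_bot_iff.mpr (hφ.injective_of_injective_permRestrict (by omega) h)⟩
  · exact hφ.exists_ker_eq_kerLevel_of_ker_parity_le (by omega) (hφ.ker_parity_le hn h)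

theorem isEndo_id : IsEndo (fun s : Fin n → Fin n => s) := fun _ _ => rfl

theorem isEndo_const {c : Fin n → Fin n} (hc : c ∘ c = c) : IsEndo (fun _ => c) :=
  fun _ _ => hc.symm

theorem isEndo_ite_bijective {c : Fin n → Fin n} (hc : c ∘ c = c) :
    IsEndo (fun s => if Bijective s then id else c) := by
  intro s s'
  by_cases hs : Bijective s <;> by_cases hs' : Bijective s' <;>
    simp only [bijective_comp_iff, hs, hs', and_self, and_false, false_and, if_true, if_false,
      id_comp, comp_id, hc]

theorem exists_idempotent_endo_separating (hn : 2 ≤ n) (k : Fin 3) :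
    ∃ η ζ : (Fin n → Fin n) → (Fin n → Fin n), IsEndo η ∧ IsEndo ζ ∧
      (fun x => η (η x)) = η ∧ (fun x => ζ (ζ x)) = ζ ∧
      (∀ x, kerLevel n k.succ (η x) (ζ x)) ∧ ¬ ∀ x, kerLevel n k.castSucc (η x) (ζ x) := by
  have : Nontrivial (Fin n) := Fin.nontrivial_iff_two_le.mpr hn
  obtain ⟨a, b, hab⟩ := exists_pair_ne (Fin n)
  fin_cases k
  · refine ⟨fun _ => const _ a, fun _ => const _ b, isEndo_const rfl, isEndo_const rfl, rfl, rfl,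
      fun _ => ?_, fun h => hab (congrFun (h id) a)⟩
    show parity (const _ a) = parity (const _ b)
    rw [parity_const, parity_const]
  · refine ⟨fun s => s, fun s => if Bijective s then id else const _ a, isEndo_id,
      isEndo_ite_bijective rfl, rfl, ?_, fun x => ?_, fun h => ?_⟩
    · funext x
      by_cases hx : Bijective x <;>
        simp only [hx, not_bijective_const, bijective_id, if_true, if_false]
    · show Bijective x = Bijective (if Bijective x then id else const _ a)
      by_cases hx : Bijective x <;>
        simp only [hx, not_bijective_const, bijective_id, if_true, if_false]
    · have hswap : parity ⇑(swap a b) = parity (if Bijective ⇑(swap a b) then id else const _ a) :=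
        h (swap a b)
      rw [if_pos (swap a b).bijective, ← Perm.coe_one, parity_perm, parity_perm,
        Perm.sign_swap hab] at hswap
      simp at hswap
  · refine ⟨fun s => s, fun _ => const _ a, isEndo_id, isEndo_const rfl, rfl, rfl,
      fun _ => trivial, fun h => not_bijective_const a ?_⟩
    have : Bijective (id : Fin n → Fin n) = Bijective (const _ a) := h id
    exact this ▸ bijective_id

theorem le_of_idempotent_test (hn : 2 ≤ n) {α β : (Fin n → Fin n) → (Fin n → Fin n)}
    {k l : Fin 4} (hα : Setoid.ker α = kerLevel n k) (hβ : Setoid.ker β = kerLevel n l)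
    (htest : ∀ η ζ : (Fin n → Fin n) → (Fin n → Fin n), IsEndo η → IsEndo ζ →
      (fun x => η (η x)) = η → (fun x => ζ (ζ x)) = ζ →
      (fun x => β (η x)) = (fun x => β (ζ x)) → (fun x => α (η x)) = (fun x => α (ζ x))) :
    l ≤ k := by
  by_contra! hkl
  obtain ⟨η, ζ, hη, hζ, hηη, hζζ, hsucc, hcast⟩ :=
    exists_idempotent_endo_separating hn ⟨k, by omega⟩
  have hβηζ : (fun x => β (η x)) = (fun x => β (ζ x)) := funext fun x => by
    have := kerLevel_monotone (show Fin.succ ⟨k, _⟩ ≤ l by rw [Fin.le_def]; simp; omega) (hsucc x)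
    rwa [← hβ] at this
  refine hcast fun x => ?_
  rw [show Fin.castSucc ⟨k, _⟩ = k from rfl, ← hα]
  exact congrFun (htest η ζ hη hζ hηη hζζ hβηζ) x

theorem comp_eq_comp_iff_of_ker_eq {X Y Z W : Type*} {α : Y → Z} {β : Y → W}
    (h : Setoid.ker α = Setoid.ker β) (γ δ : X → Y) :
    (fun x => α (γ x)) = (fun x => α (δ x)) ↔ (fun x => β (γ x)) = (fun x => β (δ x)) := by
  simp only [funext_iff]
  exact forall_congr' fun x => Setoid.ext_iff.mp h (γ x) (δ x)

end Kernels

/-- For `n ≥ 5` and semigroup endomorphisms `α`, `β` of `T_n`, the relation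
`α R* β` holds iff the defining condition holds with `γ`, `δ` restricted to idempotents. -/
theorem Rstar_via_idempotents (n : ℕ) (hn : 5 ≤ n)
    (α β : (Fin n → Fin n) → (Fin n → Fin n)) (hα : IsEndo α) (hβ : IsEndo β) :
    (∀ γ δ : (Fin n → Fin n) → (Fin n → Fin n), IsEndo γ → IsEndo δ →
        ((fun x => α (γ x)) = (fun x => α (δ x)) ↔
          (fun x => β (γ x)) = (fun x => β (δ x)))) ↔
      (∀ η ζ : (Fin n → Fin n) → (Fin n → Fin n), IsEndo η → IsEndo ζ →
        (fun x => η (η x)) = η → (fun x => ζ (ζ x)) = ζ →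
        ((fun x => α (η x)) = (fun x => α (ζ x)) ↔
          (fun x => β (η x)) = (fun x => β (ζ x)))) := by
  refine ⟨fun h η ζ hη hζ _ _ => h η ζ hη hζ, fun h γ δ _ _ => ?_⟩
  obtain ⟨k, hk⟩ := hα.exists_ker_eq_kerLevel hn
  obtain ⟨l, hl⟩ := hβ.exists_ker_eq_kerLevel hn
  have hkl : k = l := le_antisymm
    (le_of_idempotent_test (by omega) hl hk fun η ζ hη hζ hηη hζζ => (h η ζ hη hζ hηη hζζ).mp)
    (le_of_idempotent_test (by omega) hk hl fun η ζ hη hζ hηη hζζ => (h η ζ hη hζ hηη hζζ).mpr)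
  exact comp_eq_comp_iff_of_ker_eq (by rw [hk, hl, hkl]) γ δ
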